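/- arXiv:1803.03724 — 3 statements merged into one kernel-verified Lean document; each statement's English description precedes it below -/
import Mathlib

section
/- Let γ(s) = γ0(s) + f(s) • n0(s) be the normal graph of f over γ0, with κ0 differentiable, f twice differentiable, and (1 − κ0(s) f(s))² + (f'(s))² ≠ 0. Write cross(u, v) = u₁ v₂ − u₂ v₁. Then the signed curvature of γ satisfies cross(γ'(s), γ''(s)) / ‖γ'(s)‖³ = ((1 − κ0 f) f'' + 2 κ0 (f')² + κ0' f f' + κ0 (1 − κ0 f)²)(s) / ((1 − κ0(s) f(s))² + (f'(s))²)^{3/2}. -/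
open InnerProductSpace

/-! In the moving frame `(T0, n0)` the Frenet equations give
`γ' = (1 - κ0 f) T0 + f' n0` and `γ'' = (-κ0' f - 2 κ0 f') T0 + (f'' + κ0 (1 - κ0 f)) n0`.
Since `n0 = J T0` with `T0` a unit vector, `cross` and the norm of such combinations are computed
from their coefficients alone: `cross (a T0 + b n0) (p T0 + q n0) = a q - b p` and
`‖a T0 + b n0‖² = a² + b²`. -/

/-- Rotation by π/2 in the Euclidean plane. -/
noncomputable def J : EuclideanSpace ℝ (Fin 2) → EuclideanSpace ℝ (Fin 2) :=
  fun v => WithLp.toLp 2 ![-(v 1), v 0]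

/-- Signed area form on the Euclidean plane: cross u v = u₁ v₂ − u₂ v₁. -/
noncomputable def cross (u v : EuclideanSpace ℝ (Fin 2)) : ℝ :=
  u 0 * v 1 - u 1 * v 0

theorem norm_sq_fin_two (v : EuclideanSpace ℝ (Fin 2)) : ‖v‖ ^ 2 = v 0 ^ 2 + v 1 ^ 2 := by
  simp only [EuclideanSpace.norm_sq_eq, Real.norm_eq_abs, sq_abs, Fin.sum_univ_two]

theorem cross_smul_add_smul_J (v : EuclideanSpace ℝ (Fin 2)) (a b p q : ℝ) :
    cross (a • v + b • J v) (p • v + q • J v) = (a * q - b * p) * ‖v‖ ^ 2 := by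
  simp only [norm_sq_fin_two, cross, J, PiLp.add_apply, PiLp.smul_apply, smul_eq_mul,
    Matrix.cons_val_zero, Matrix.cons_val_one, Matrix.cons_val_fin_one]
  ring

theorem norm_sq_smul_add_smul_J (v : EuclideanSpace ℝ (Fin 2)) (a b : ℝ) :
    ‖a • v + b • J v‖ ^ 2 = (a ^ 2 + b ^ 2) * ‖v‖ ^ 2 := by
  simp only [norm_sq_fin_two, J, PiLp.add_apply, PiLp.smul_apply, smul_eq_mul,
    Matrix.cons_val_zero, Matrix.cons_val_one, Matrix.cons_val_fin_one]
  ring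

theorem pow_three_eq_sq_rpow {x : ℝ} (hx : 0 ≤ x) : x ^ 3 = (x ^ 2) ^ ((3 : ℝ) / 2) := by
  rw [← Real.rpow_natCast_mul hx]
  norm_num

section Frenet

variable {E : Type*} [NormedAddCommGroup E] [NormedSpace ℝ E] {T n : ℝ → E} {κ s : ℝ}

theorem HasDerivAt.smul_add_smul_frenet {α β : ℝ → ℝ} {α' β' : ℝ}
    (hT : HasDerivAt T (κ • n s) s) (hn : HasDerivAt n (-κ • T s) s)
    (hα : HasDerivAt α α' s) (hβ : HasDerivAt β β' s) :
    HasDerivAt (fun t => α t • T t + β t • n t)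
      ((α' - κ * β s) • T s + (β' + κ * α s) • n s) s :=
  ((hα.smul hT).add (hβ.smul hn)).congr_deriv (by module)

theorem HasDerivAt.add_smul_frenet_normal {γ0 : ℝ → E} {f : ℝ → ℝ} {f' : ℝ}
    (hγ0 : HasDerivAt γ0 (T s) s) (hn : HasDerivAt n (-κ • T s) s) (hf : HasDerivAt f f' s) :
    HasDerivAt (fun t => γ0 t + f t • n t) ((1 - κ * f s) • T s + f' • n s) s :=
  (hγ0.add (hf.smul hn)).congr_deriv (by module)

end Frenet

/-- Signed curvature of the normal graph `γ = γ0 + f • n0`. -/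
theorem stmt6 (γ0 T0 n0 : ℝ → EuclideanSpace ℝ (Fin 2)) (κ0 f : ℝ → ℝ)
    (hγ0 : Differentiable ℝ γ0)
    (hT0 : ∀ s, T0 s = deriv γ0 s)
    (hT0d : Differentiable ℝ T0)
    (hn0 : ∀ s, n0 s = J (T0 s))
    (hn0d : Differentiable ℝ n0)
    (hunit : ∀ s, ‖T0 s‖ = 1)
    (hfrenetT : ∀ s, deriv T0 s = κ0 s • n0 s)
    (hfrenetN : ∀ s, deriv n0 s = (-κ0 s) • T0 s)
    (hκ0 : Differentiable ℝ κ0)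
    (hf : Differentiable ℝ f)
    (hf' : Differentiable ℝ (deriv f))
    (γ : ℝ → EuclideanSpace ℝ (Fin 2))
    (hγ : ∀ s, γ s = γ0 s + f s • n0 s) :
    ∀ s, (1 - κ0 s * f s) ^ 2 + (deriv f s) ^ 2 ≠ 0 →
      cross (deriv γ s) (deriv (deriv γ) s) / ‖deriv γ s‖ ^ 3
        = ((1 - κ0 s * f s) * deriv (deriv f) s + 2 * κ0 s * (deriv f s) ^ 2
            + deriv κ0 s * f s * deriv f s + κ0 s * (1 - κ0 s * f s) ^ 2)
          / ((1 - κ0 s * f s) ^ 2 + (deriv f s) ^ 2) ^ ((3 : ℝ) / 2) := by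
  intro s _
  have hT : ∀ t, HasDerivAt T0 (κ0 t • n0 t) t := fun t => hfrenetT t ▸ (hT0d t).hasDerivAt
  have hn : ∀ t, HasDerivAt n0 (-κ0 t • T0 t) t := fun t => hfrenetN t ▸ (hn0d t).hasDerivAt
  have hγ' : deriv γ = fun t => (1 - κ0 t * f t) • T0 t + deriv f t • n0 t := by
    funext t
    rw [funext hγ]
    exact ((hT0 t ▸ (hγ0 t).hasDerivAt).add_smul_frenet_normal (hn t) (hf t).hasDerivAt).deriv
  have hγ'' : deriv (deriv γ) s
      = (-(deriv κ0 s * f s + κ0 s * deriv f s) - κ0 s * deriv f s) • T0 s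
        + (deriv (deriv f) s + κ0 s * (1 - κ0 s * f s)) • n0 s := by
    rw [hγ']
    exact ((hT s).smul_add_smul_frenet (hn s)
      (((hκ0 s).hasDerivAt.mul (hf s).hasDerivAt).const_sub 1) (hf' s).hasDerivAt).deriv
  rw [hγ'', hγ']
  beta_reduce
  rw [hn0 s, cross_smul_add_smul_J, pow_three_eq_sq_rpow (norm_nonneg _),
    norm_sq_smul_add_smul_J, hunit, one_pow, mul_one, mul_one]
  ring
end

section
/- Let f : ℝ × ℝ → ℝ be smooth and define the evolving normal graph γ(s, t) = γ0(s) + f(s, t) • n0(s). Assume that for all (s, t), (1 − κ0(s) f(s, t))² + (∂_s f(s, t))² ≠ 0, and that γ evolves by curve shortening flow: ∂_t γ(s, t) = κ(s, t) • n̂(s, t), where n̂(s, t) = J(∂_s γ(s, t))/‖∂_s γ(s, t)‖ and κ(s, t) = cross(∂_s γ(s, t), ∂_s² γ(s, t))/‖∂_s γ(s, t)‖³. Then f satisfies the scalar evolution equation ∂_t f(s, t) = κ(s, t) · (1 − κ0(s) f(s, t)) / √((1 − κ0(s) f(s, t))² + (∂_s f(s, t))²). -/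
open InnerProductSpace

/-- Scalar evolution equation for a normal graph `γ(s,t) = γ0(s) + f(s,t) • n0(s)`
evolving by curve shortening flow:
`∂ₜ f = κ (1 − κ0 f)/√((1 − κ0 f)² + (∂ₛ f)²)`. -/
theorem stmt7 (γ0 T0 n0 : ℝ → EuclideanSpace ℝ (Fin 2)) (κ0 : ℝ → ℝ)
    (hγ0 : Differentiable ℝ γ0)
    (hT0 : ∀ s, T0 s = deriv γ0 s)
    (hT0d : Differentiable ℝ T0)
    (hn0 : ∀ s, n0 s = J (T0 s))
    (hn0d : Differentiable ℝ n0)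
    (hunit : ∀ s, ‖T0 s‖ = 1)
    (hfrenetT : ∀ s, deriv T0 s = κ0 s • n0 s)
    (hfrenetN : ∀ s, deriv n0 s = (-κ0 s) • T0 s)
    (f : ℝ × ℝ → ℝ) (hf : ContDiff ℝ (⊤ : ℕ∞) f)
    (γ : ℝ → ℝ → EuclideanSpace ℝ (Fin 2))
    (hγ : ∀ s t, γ s t = γ0 s + f (s, t) • n0 s)
    (hreg : ∀ s t, (1 - κ0 s * f (s, t)) ^ 2 + (deriv (fun s' => f (s', t)) s) ^ 2 ≠ 0)
    (nHat : ℝ → ℝ → EuclideanSpace ℝ (Fin 2))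
    (hnHat : ∀ s t, nHat s t = (‖deriv (fun s' => γ s' t) s‖)⁻¹ • J (deriv (fun s' => γ s' t) s))
    (κ : ℝ → ℝ → ℝ)
    (hκ : ∀ s t, κ s t
      = cross (deriv (fun s' => γ s' t) s) (deriv (deriv (fun s' => γ s' t)) s)
          / ‖deriv (fun s' => γ s' t) s‖ ^ 3)
    (hflow : ∀ s t, deriv (fun t' => γ s t') t = κ s t • nHat s t) :
    ∀ s t, deriv (fun t' => f (s, t')) t
      = κ s t * (1 - κ0 s * f (s, t))
          / Real.sqrt ((1 - κ0 s * f (s, t)) ^ 2 + (deriv (fun s' => f (s', t)) s) ^ 2) := by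
  intro s t
  have hfd : Differentiable ℝ f := hf.differentiable (by simp)
  set a : ℝ := 1 - κ0 s * f (s, t) with ha
  set b : ℝ := deriv (fun s' => f (s', t)) s with hb
  set c : ℝ := deriv (fun t' => f (s, t')) t with hc
  -- derivative of f in s
  have hfs : HasDerivAt (fun s' => f (s', t)) b s := by
    have : DifferentiableAt ℝ (fun s' => f (s', t)) s :=
      (hfd (s, t)).comp s (differentiableAt_id.prodMk (differentiableAt_const t))
    exact this.hasDerivAt
  have hft : HasDerivAt (fun t' => f (s, t')) c t := by
    have : DifferentiableAt ℝ (fun t' => f (s, t')) t :=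
      (hfd (s, t)).comp t ((differentiableAt_const s).prodMk differentiableAt_id)
    exact this.hasDerivAt
  -- spatial derivative of γ
  have hγs : HasDerivAt (fun s' => γ s' t) (a • T0 s + b • n0 s) s := by
    have h1 : HasDerivAt γ0 (T0 s) s := (hT0 s) ▸ (hγ0 s).hasDerivAt
    have h2 : HasDerivAt n0 ((-κ0 s) • T0 s) s := (hfrenetN s) ▸ (hn0d s).hasDerivAt
    have h3 := hfs.smul h2
    have h4 := h1.add h3
    have heq : (fun s' => γ s' t) = fun s' => γ0 s' + f (s', t) • n0 s' := by
      funext s'; exact hγ s' t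
    rw [heq]
    refine HasDerivAt.congr_deriv h4 ?_
    rw [ha]
    module
  have hV : deriv (fun s' => γ s' t) s = a • T0 s + b • n0 s := hγs.deriv
  -- time derivative of γ
  have hγt : deriv (fun t' => γ s t') t = c • n0 s := by
    have heq : (fun t' => γ s t') = fun t' => γ0 s + f (s, t') • n0 s := by
      funext t'; exact hγ s t'
    rw [heq]
    exact ((hft.smul_const (n0 s)).const_add (γ0 s)).deriv
  -- inner product facts
  have hTT : (inner ℝ (T0 s) (T0 s) : ℝ) = 1 := by
    rw [real_inner_self_eq_norm_sq, hunit s]; norm_num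
  have hsum : T0 s 0 * T0 s 0 + T0 s 1 * T0 s 1 = 1 := by
    have := hTT
    rw [PiLp.inner_apply] at this
    simpa [PiLp.inner_apply, Fin.sum_univ_two, RCLike.inner_apply, conj_trivial, ← pow_two] using this
  have hTn : (inner ℝ (T0 s) (n0 s) : ℝ) = 0 := by
    simp [hn0, J, PiLp.inner_apply, Fin.sum_univ_two, RCLike.inner_apply, conj_trivial]
    ring
  have hnn : (inner ℝ (n0 s) (n0 s) : ℝ) = 1 := by
    simp only [hn0, J, PiLp.inner_apply, Fin.sum_univ_two, RCLike.inner_apply, conj_trivial,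
      Matrix.cons_val_zero, Matrix.cons_val_one, Matrix.head_cons]
    nlinarith [hsum]
  have hnT : (inner ℝ (n0 s) (T0 s) : ℝ) = 0 := by
    rw [real_inner_comm]; exact hTn
  set V : EuclideanSpace ℝ (Fin 2) := a • T0 s + b • n0 s with hVdef
  -- norm of V
  have hVsq : (inner ℝ V V : ℝ) = a ^ 2 + b ^ 2 := by
    simp only [hVdef, inner_add_add_self, real_inner_smul_left, real_inner_smul_right,
      hTT, hTn, hnn, hnT]
    ring
  have hVnorm : ‖V‖ = Real.sqrt (a ^ 2 + b ^ 2) := by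
    rw [← hVsq, real_inner_self_eq_norm_sq]
    rw [Real.sqrt_sq (norm_nonneg V)]
  have hVpos : (0:ℝ) < a ^ 2 + b ^ 2 := by
    rcases lt_or_eq_of_le (by positivity : (0:ℝ) ≤ a ^ 2 + b ^ 2) with h | h
    · exact h
    · exact absurd h.symm (hreg s t)
  have hVne : ‖V‖ ≠ 0 := by
    rw [hVnorm]
    positivity
  -- J V
  have hJV : J V = a • n0 s - b • T0 s := by
    ext i
    fin_cases i <;>
      simp [hVdef, hn0, J, PiLp.add_apply, PiLp.smul_apply, PiLp.sub_apply, smul_eq_mul] <;>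
      ring
  -- take inner product of flow with n0
  have hflow' : c • n0 s = κ s t • ((‖V‖)⁻¹ • (a • n0 s - b • T0 s)) := by
    rw [← hJV, ← hγt, hflow s t, hnHat s t, hV]
  have hinner := congrArg (fun w => (inner ℝ w (n0 s) : ℝ)) hflow'
  simp only [real_inner_smul_left, inner_sub_left, real_inner_smul_left, hnn, hnT, hTn,
    mul_one, mul_zero, sub_zero] at hinner
  rw [hinner, hVnorm, div_eq_mul_inv]
  ring
end

section
/- (Modified Lax–Milgram.) Let H be a real Hilbert space, V a real normed vector space, and j : V → H a continuous linear map with dense range. Let a : H × V → ℝ be a bilinear form such that there exist constants C > 0 and δ > 0 with |a(u, v)| ≤ C ‖u‖_H ‖v‖_V for all u ∈ H, v ∈ V, and a(j v, v) ≥ δ ‖j v‖_H² for all v ∈ V. Then for every bounded linear functional F : H → ℝ there exists u ∈ H such that F(j v) = a(u, v) for all v ∈ V. -/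
/-! The form `a` is represented through the Riesz map as `a u v = ⟪A v, u⟫` for a linear
`A : V → H`. Coercivity gives `δ ‖j v‖ ≤ ‖A v‖`, so `A v ↦ F (j v)` is a well-defined bounded
functional on the range of `A`; a Hahn–Banach extension of it to `H` is, by Riesz, `⟪·, u⟫` for
the required `u`. -/

open InnerProductSpace

section Extension

variable {𝕜 E V : Type*} [RCLike 𝕜] [NormedAddCommGroup E] [NormedSpace 𝕜 E]
  [AddCommGroup V] [Module 𝕜 V]

theorem LinearMap.ker_le_ker_of_norm_le (T : V →ₗ[𝕜] E) (φ : V →ₗ[𝕜] 𝕜) (K : ℝ)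
    (hφ : ∀ v, ‖φ v‖ ≤ K * ‖T v‖) : LinearMap.ker T ≤ LinearMap.ker φ := fun v hv => by
  simpa [LinearMap.mem_ker.mp hv] using hφ v

noncomputable def LinearMap.rangeFactor (T : V →ₗ[𝕜] E) (φ : V →ₗ[𝕜] 𝕜) (h : LinearMap.ker T ≤ LinearMap.ker φ) :
    LinearMap.range T →ₗ[𝕜] 𝕜 :=
  (LinearMap.ker T).liftQ φ h ∘ₗ T.quotKerEquivRange.symm.toLinearMap

theorem LinearMap.rangeFactor_apply (T : V →ₗ[𝕜] E) (φ : V →ₗ[𝕜] 𝕜)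
    (h : LinearMap.ker T ≤ LinearMap.ker φ) (v : V) :
    T.rangeFactor φ h ⟨T v, LinearMap.mem_range_self T v⟩ = φ v := by
  simp [LinearMap.rangeFactor, T.quotKerEquivRange_symm_apply_image]

theorem LinearMap.exists_strongDual_comp_eq_of_norm_le (T : V →ₗ[𝕜] E) (φ : V →ₗ[𝕜] 𝕜) (K : ℝ)
    (hφ : ∀ v, ‖φ v‖ ≤ K * ‖T v‖) : ∃ g : StrongDual 𝕜 E, ∀ v, g (T v) = φ v := by
  have hker := T.ker_le_ker_of_norm_le φ K hφ
  have hbound : ∀ x : LinearMap.range T, ‖T.rangeFactor φ hker x‖ ≤ K * ‖x‖ := by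
    rintro ⟨_, v, rfl⟩
    rw [T.rangeFactor_apply]
    exact hφ v
  obtain ⟨g, hg, -⟩ := exists_extension_norm_eq _ ((T.rangeFactor φ hker).mkContinuous K hbound)
  exact ⟨g, fun v => by simpa [T.rangeFactor_apply] using hg ⟨T v, LinearMap.mem_range_self T v⟩⟩

end Extension

section Riesz

variable {H V : Type*} [NormedAddCommGroup H] [InnerProductSpace ℝ H] [CompleteSpace H]
  [AddCommGroup V] [Module ℝ V]

theorem LinearMap.exists_eq_inner_of_norm_le (T : V →ₗ[ℝ] H) (φ : V →ₗ[ℝ] ℝ) (K : ℝ)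
    (hφ : ∀ v, ‖φ v‖ ≤ K * ‖T v‖) : ∃ u : H, ∀ v, φ v = ⟪T v, u⟫_ℝ := by
  obtain ⟨g, hg⟩ := T.exists_strongDual_comp_eq_of_norm_le φ K hφ
  exact ⟨(toDual ℝ H).symm g, fun v => by rw [real_inner_comm, toDual_symm_apply, hg]⟩

noncomputable def rieszOperator (a : H →ₗ[ℝ] V →ₗ[ℝ] ℝ) (ha : ∀ v, Continuous (a.flip v)) :
    V →ₗ[ℝ] H where
  toFun v := (toDual ℝ H).symm ⟨a.flip v, ha v⟩
  map_add' v w := ext_inner_right ℝ fun u => by simp [toDual_symm_apply, inner_add_left]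
  map_smul' c v := ext_inner_right ℝ fun u => by simp [toDual_symm_apply, real_inner_smul_left]

theorem inner_rieszOperator (a : H →ₗ[ℝ] V →ₗ[ℝ] ℝ) (ha : ∀ v, Continuous (a.flip v)) (v : V)
    (u : H) : ⟪rieszOperator a ha v, u⟫_ℝ = a u v := by
  simp [rieszOperator, toDual_symm_apply]

end Riesz

theorem mul_norm_le_norm_of_mul_sq_le_inner {H : Type*} [NormedAddCommGroup H]
    [InnerProductSpace ℝ H] {x y : H} {δ : ℝ} (h : δ * ‖y‖ ^ 2 ≤ ⟪x, y⟫_ℝ) : δ * ‖y‖ ≤ ‖x‖ := by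
  rcases (norm_nonneg y).eq_or_lt with hy | hy
  · simp [← hy]
  · refine le_of_mul_le_mul_right ?_ hy
    nlinarith [real_inner_le_norm x y]

theorem stmt8_general {H V : Type*}
    [NormedAddCommGroup H] [InnerProductSpace ℝ H] [CompleteSpace H]
    [NormedAddCommGroup V] [NormedSpace ℝ V]
    (j : V →L[ℝ] H)
    (a : H →ₗ[ℝ] V →ₗ[ℝ] ℝ)
    (C δ : ℝ) (hδ : 0 < δ)
    (hbound : ∀ (u : H) (v : V), |a u v| ≤ C * ‖u‖ * ‖v‖)
    (hcoercive : ∀ v : V, δ * ‖j v‖ ^ 2 ≤ a (j v) v)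
    (F : H →L[ℝ] ℝ) :
    ∃ u : H, ∀ v : V, F (j v) = a u v := by
  have ha : ∀ v, Continuous (a.flip v) := fun v =>
    AddMonoidHomClass.continuous_of_bound (a.flip v) (C * ‖v‖) fun u => by
      simpa [mul_right_comm] using hbound u v
  set A := rieszOperator a ha
  have hA : ∀ v, δ * ‖j v‖ ≤ ‖A v‖ := fun v =>
    mul_norm_le_norm_of_mul_sq_le_inner (by rw [inner_rieszOperator]; exact hcoercive v)
  have hFj : ∀ v, ‖F (j v)‖ ≤ ‖F‖ / δ * ‖A v‖ := fun v => calc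
    ‖F (j v)‖ ≤ ‖F‖ * ‖j v‖ := F.le_opNorm _
    _ = ‖F‖ / δ * (δ * ‖j v‖) := by field_simp
    _ ≤ ‖F‖ / δ * ‖A v‖ := by gcongr; exact hA v
  obtain ⟨u, hu⟩ := A.exists_eq_inner_of_norm_le ((F : H →ₗ[ℝ] ℝ) ∘ₗ (j : V →ₗ[ℝ] H)) _ hFj
  exact ⟨u, fun v => (hu v).trans (inner_rieszOperator a ha v u)⟩

/-- Modified Lax–Milgram theorem: `H` a real Hilbert space, `V` a normed space,
`j : V → H` continuous linear with dense range, and `a` a bilinear form on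
`H × V` which is bounded (`|a u v| ≤ C ‖u‖ ‖v‖`) and coercive along `j`
(`a (j v) v ≥ δ ‖j v‖²`). Then every bounded linear functional `F` on `H`
is represented on the image of `j`: `F (j v) = a u v` for some `u`. -/
theorem stmt8 {H V : Type*}
    [NormedAddCommGroup H] [InnerProductSpace ℝ H] [CompleteSpace H]
    [NormedAddCommGroup V] [NormedSpace ℝ V]
    (j : V →L[ℝ] H) (hj : DenseRange j)
    (a : H →ₗ[ℝ] V →ₗ[ℝ] ℝ)
    (C δ : ℝ) (hC : 0 < C) (hδ : 0 < δ)
    (hbound : ∀ (u : H) (v : V), |a u v| ≤ C * ‖u‖ * ‖v‖)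
    (hcoercive : ∀ v : V, δ * ‖j v‖ ^ 2 ≤ a (j v) v)
    (F : H →L[ℝ] ℝ) :
    ∃ u : H, ∀ v : V, F (j v) = a u v :=
  stmt8_general j a C δ hδ hbound hcoercive F
end
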